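/- arXiv:2208.07549 — 3 statements merged into one kernel-verified Lean document; each statement's English description precedes it below -/
import Mathlib

section
/- For all integers n ≥ 0 and r ≥ 0, the generalized falling factorial satisfies (x)_{n,λ} = (1/(2·(n+r)_r)) · ( ∑_{l=0}^{n} C(n+r, l+r) · (1)_{n−l,λ} · A^{(r)}_{l+r,λ}(x) + A^{(r)}_{n+r,λ}(x) ), where (n+r)_r = (n+r)(n+r−1)⋯(n+1) is the falling factorial. -/
open Finset

noncomputable section

/-- The generalized falling factorial `(x)_{n,λ} = x(x-λ)⋯(x-(n-1)λ)`. -/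
def gff (lam x : ℝ) (n : ℕ) : ℝ := ∏ i ∈ Finset.range n, (x - i * lam)

/-- The ordinary falling factorial `(x)_r = x(x-1)⋯(x-r+1)` of a real number. -/
def ff (x : ℝ) (r : ℕ) : ℝ := ∏ i ∈ Finset.range r, (x - i)

/-- The degenerate exponential `e_λ^x(t) = ∑_{n≥0} (x)_{n,λ} t^n/n!` as a formal power series. -/
def degExp (lam x : ℝ) : PowerSeries ℝ :=
  PowerSeries.mk fun n => gff lam x n / n.factorial

/-- `egfCoeff f n = a_n` when `f = ∑_{n≥0} a_n t^n/n!`. -/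
def egfCoeff (f : PowerSeries ℝ) (n : ℕ) : ℝ := n.factorial * PowerSeries.coeff (R := ℝ) n f

/-- The formal binomial power `(1+g)^a = ∑_{k≥0} (a)_k/k! · g^k`,
intended for `g` with zero constant term (so the sum is coefficientwise finite). -/
def binomPow (a : ℝ) (g : PowerSeries ℝ) : PowerSeries ℝ :=
  PowerSeries.mk fun n =>
    ∑ k ∈ Finset.range (n + 1), (ff a k / k.factorial) * PowerSeries.coeff (R := ℝ) n (g ^ k)

/-- `(2/(e_λ(t)+1))^α`, the `(-α)`-th formal binomial power of `(e_λ(t)+1)/2 = 1 + (e_λ(t)-1)/2`. -/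
def eulerGF (lam a : ℝ) : PowerSeries ℝ :=
  binomPow (-a) (PowerSeries.C (R := ℝ) (1 / 2) * (degExp lam 1 - 1))

/-- Generalized degenerate Euler-Genocchi polynomials `A^{(r)}_{n,λ}(x)`, defined by
`∑_{n≥0} A^{(r)}_{n,λ}(x) t^n/n! = 2 t^r e_λ^x(t)/(e_λ(t)+1)`. -/
def A (lam : ℝ) (r : ℕ) (x : ℝ) (n : ℕ) : ℝ :=
  egfCoeff (2 * PowerSeries.X ^ r * degExp lam x * (degExp lam 1 + 1)⁻¹) n

/-- Generalized degenerate Euler-Genocchi polynomials of order `α`, `A^{(r,α)}_{n,λ}(x)`,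
defined by `∑_{n≥0} A^{(r,α)}_{n,λ}(x) t^n/n! = t^r (2/(e_λ(t)+1))^α e_λ^x(t)`. -/
def Aa (lam a : ℝ) (r : ℕ) (x : ℝ) (n : ℕ) : ℝ :=
  egfCoeff (PowerSeries.X ^ r * eulerGF lam a * degExp lam x) n

/-- Degenerate Euler polynomials of order `α`:
`∑_{n≥0} E^{(α)}_{n,λ}(x) t^n/n! = (2/(e_λ(t)+1))^α e_λ^x(t)`. -/
def Epoly (lam a x : ℝ) (n : ℕ) : ℝ := egfCoeff (eulerGF lam a * degExp lam x) n

/-- Degenerate Euler polynomials `E_{n,λ}(x)`: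
`∑_{n≥0} E_{n,λ}(x) t^n/n! = 2 e_λ^x(t)/(e_λ(t)+1)`. -/
def E1 (lam x : ℝ) (n : ℕ) : ℝ :=
  egfCoeff (2 * degExp lam x * (degExp lam 1 + 1)⁻¹) n

/-- Degenerate Euler numbers `E_{n,λ}`: `∑_{n≥0} E_{n,λ} t^n/n! = 2/(e_λ(t)+1)`. -/
def Enum (lam : ℝ) (n : ℕ) : ℝ :=
  egfCoeff (2 * (degExp lam 1 + 1)⁻¹) n

/-- Degenerate Stirling numbers of the second kind:
`∑_{n≥k} S_{2,λ}(n,k) t^n/n! = (1/k!)(e_λ(t)-1)^k`. -/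
def S2 (lam : ℝ) (n k : ℕ) : ℝ :=
  egfCoeff (PowerSeries.C (R := ℝ) (1 / k.factorial) * (degExp lam 1 - 1) ^ k) n

/-- Alternating degenerate power sum `T_{k,λ}(n) = ∑_{i=0}^n (-1)^i (i)_{k,λ}`. -/
def T (lam : ℝ) (k n : ℕ) : ℝ := ∑ i ∈ Finset.range (n + 1), (-1 : ℝ) ^ i * gff lam i k
lemma ff_cast (n r : ℕ) : ff ((n : ℝ) + r) r * n.factorial = (n + r).factorial := by
  induction r with
  | zero => simp [ff]
  | succ r ih =>
    have h : ff ((n : ℝ) + ((r : ℝ) + 1)) (r + 1)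
        = ff ((n : ℝ) + r) r * ((n : ℝ) + r + 1) := by
      rw [ff, Finset.prod_range_succ', ff]
      congr 1
      · exact Finset.prod_congr rfl fun i _ => by push_cast; ring
      · push_cast; ring
    have hfac : (n + (r + 1)).factorial = (n + r + 1) * (n + r).factorial := by
      rw [show n + (r + 1) = (n + r) + 1 by ring, Nat.factorial_succ]
    push_cast [hfac]
    push_cast at h
    rw [h]
    push_cast at ih
    linear_combination ((n : ℝ) + r + 1) * ih

lemma coeff_degExp (lam x : ℝ) (n : ℕ) :
    PowerSeries.coeff (R := ℝ) n (degExp lam x) = gff lam x n / n.factorial := by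
  simp [degExp]

lemma gff_zero (lam x : ℝ) : gff lam x 0 = 1 := by simp [gff]


/-- Theorem 1 of the paper: for `n, r ≥ 0`,
`(x)_{n,λ} = (1/(2(n+r)_r)) (∑_{l=0}^n C(n+r,l+r) (1)_{n-l,λ} A^{(r)}_{l+r,λ}(x) + A^{(r)}_{n+r,λ}(x))`. -/
theorem gff_eq_sum_A (lam : ℝ) (hlam : lam ≠ 0) (x : ℝ) (n r : ℕ) :
    gff lam x n =
      (1 / (2 * ff ((n : ℝ) + r) r)) *
        ((∑ l ∈ Finset.range (n + 1),
            ((n + r).choose (l + r) : ℝ) * gff lam 1 (n - l) * A lam r x (l + r)) +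
          A lam r x (n + r)) := by
  set u : PowerSeries ℝ := degExp lam 1 + 1 with hu
  set F : PowerSeries ℝ := 2 * PowerSeries.X ^ r * degExp lam x * u⁻¹ with hF
  have hcu : PowerSeries.constantCoeff (R := ℝ) u ≠ 0 := by
    rw [hu]
    simp only [map_add, ← PowerSeries.coeff_zero_eq_constantCoeff_apply, coeff_degExp]
    simp [gff_zero]
  have huF : u * F = 2 * PowerSeries.X ^ r * degExp lam x := by
    rw [hF]
    have hinv := PowerSeries.mul_inv_cancel u hcu
    calc u * (2 * PowerSeries.X ^ r * degExp lam x * u⁻¹)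
        = 2 * PowerSeries.X ^ r * degExp lam x * (u * u⁻¹) := by ring
      _ = _ := by rw [hinv, mul_one]
  have hcF : ∀ m : ℕ, PowerSeries.coeff (R := ℝ) m F = A lam r x m / m.factorial := by
    intro m
    rw [A, egfCoeff, ← hF]
    field_simp
  have hFzero : ∀ m : ℕ, m < r → PowerSeries.coeff (R := ℝ) m F = 0 := by
    intro m hm
    have h : F = PowerSeries.X ^ r * (2 * degExp lam x * u⁻¹) := by rw [hF]; ring
    rw [h, PowerSeries.coeff_X_pow_mul', if_neg (by omega)]
  have key : 2 * gff lam x n / n.factorial =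
      (∑ l ∈ Finset.range (n + 1),
        gff lam 1 (n - l) / (n - l).factorial * (A lam r x (l + r) / (l + r).factorial)) +
      A lam r x (n + r) / (n + r).factorial := by
    have h1 : PowerSeries.coeff (R := ℝ) (n + r) (u * F) = 2 * gff lam x n / n.factorial := by
      rw [huF]
      have h2 : (2 : PowerSeries ℝ) * PowerSeries.X ^ r * degExp lam x
          = PowerSeries.C (R := ℝ) 2 * (PowerSeries.X ^ r * degExp lam x) := by
        rw [mul_assoc, map_ofNat (PowerSeries.C (R := ℝ)) 2]
      rw [h2, PowerSeries.coeff_C_mul, PowerSeries.coeff_X_pow_mul, coeff_degExp]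
      ring
    have hmul : PowerSeries.coeff (R := ℝ) (n + r) (u * F)
        = ∑ i ∈ Finset.range (n + r + 1),
            PowerSeries.coeff (R := ℝ) i u * PowerSeries.coeff (R := ℝ) (n + r - i) F := by
      rw [PowerSeries.coeff_mul]
      exact Finset.Nat.sum_antidiagonal_eq_sum_range_succ
        (fun i j => PowerSeries.coeff (R := ℝ) i u * PowerSeries.coeff (R := ℝ) j F) (n + r)
    rw [hmul] at h1
    have hcoeffu : ∀ i : ℕ, PowerSeries.coeff (R := ℝ) i u
        = gff lam 1 i / i.factorial + (if i = 0 then 1 else 0) := by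
      intro i
      rw [hu, map_add, coeff_degExp]
      congr 1
      by_cases hi : i = 0 <;> simp [hi]
    rw [Finset.sum_congr rfl (fun i _ => by rw [hcoeffu i, add_mul])] at h1
    rw [Finset.sum_add_distrib] at h1
    have h2 : (∑ i ∈ Finset.range (n + r + 1),
        (if i = 0 then (1:ℝ) else 0) * PowerSeries.coeff (R := ℝ) (n + r - i) F)
        = A lam r x (n + r) / (n + r).factorial := by
      rw [Finset.sum_eq_single 0]
      · simp [hcF]
      · intro b _ hb; simp [hb]
      · intro h; exact absurd (Finset.mem_range.2 (by omega)) h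
    rw [h2] at h1
    have h3 : (∑ i ∈ Finset.range (n + r + 1),
        gff lam 1 i / i.factorial * PowerSeries.coeff (R := ℝ) (n + r - i) F)
        = ∑ i ∈ Finset.range (n + 1),
        gff lam 1 i / i.factorial * PowerSeries.coeff (R := ℝ) (n + r - i) F := by
      refine (Finset.sum_subset (Finset.range_subset_range.2 (by omega)) ?_).symm
      intro i hi hni
      simp only [Finset.mem_range] at hi hni
      rw [hFzero (n + r - i) (by omega), mul_zero]
    rw [h3] at h1
    have h4 : (∑ i ∈ Finset.range (n + 1),
        gff lam 1 i / i.factorial * PowerSeries.coeff (R := ℝ) (n + r - i) F)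
        = ∑ l ∈ Finset.range (n + 1),
        gff lam 1 (n - l) / (n - l).factorial * (A lam r x (l + r) / (l + r).factorial) := by
      rw [← Finset.sum_range_reflect]
      apply Finset.sum_congr rfl
      intro l hl
      rw [Finset.mem_range] at hl
      have h5 : n + 1 - 1 - l = n - l := by omega
      have h6 : n + r - (n - l) = l + r := by omega
      rw [h5, h6, hcF]
    rw [h4] at h1
    linarith [h1]
  have hffn : ff ((n : ℝ) + r) r * n.factorial = (n + r).factorial := ff_cast n r
  have hnfac : (n.factorial : ℝ) ≠ 0 := Nat.cast_ne_zero.2 (Nat.factorial_ne_zero _)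
  have hffne : ff ((n : ℝ) + r) r ≠ 0 := by
    intro h
    rw [h, zero_mul] at hffn
    exact (Nat.cast_ne_zero.2 (Nat.factorial_ne_zero _)) hffn.symm
  have h2ff : (2:ℝ) * ff ((n:ℝ)+r) r ≠ 0 := mul_ne_zero two_ne_zero hffne
  rw [one_div, mul_comm ((2 * ff ((n:ℝ)+r) r)⁻¹), ← div_eq_mul_inv, eq_div_iff h2ff]
  have expand : gff lam x n * (2 * ff ((n:ℝ)+r) r)
      = ((n+r).factorial : ℝ) * (2 * gff lam x n / n.factorial) := by
    rw [← hffn]; field_simp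
  rw [expand, key, mul_add, Finset.mul_sum]
  congr 1
  · apply Finset.sum_congr rfl
    intro l hl
    rw [Finset.mem_range] at hl
    have hle : l + r ≤ n + r := by omega
    have hc := Nat.choose_mul_factorial_mul_factorial hle
    rw [show n + r - (l + r) = n - l by omega] at hc
    have hc' : ((n+r).choose (l+r) : ℝ) * (l+r).factorial * (n-l).factorial
        = (n+r).factorial := by exact_mod_cast hc
    have hlf : ((l+r).factorial : ℝ) ≠ 0 := Nat.cast_ne_zero.2 (Nat.factorial_ne_zero _)
    have hnlf : ((n-l).factorial : ℝ) ≠ 0 := Nat.cast_ne_zero.2 (Nat.factorial_ne_zero _)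
    field_simp
    linear_combination (-(gff lam 1 (n-l) * A lam r x (l+r))) * hc'
  · have hnrf : ((n+r).factorial : ℝ) ≠ 0 := Nat.cast_ne_zero.2 (Nat.factorial_ne_zero _)
    field_simp
end
end

section
/- For every odd positive integer m and all integers n ≥ 0, r ≥ 0, the generalized degenerate Euler-Genocchi polynomials satisfy the distribution relation A^{(r)}_{n,λ}(x) = m^{n−r} · ∑_{l=0}^{m−1} (−1)^l · A^{(r)}_{n,λ/m}((l+x)/m). -/
open Finset

noncomputable section

/-!
For odd `m`, `∑_{l<m} (-1)^l e_λ^{l+x}(t) · (e_λ(t) + 1) = e_λ^x(t) (e_λ(t)^m + 1)`, so the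
generating function `2 t^r e_λ^x(t) / (e_λ(t) + 1)` equals
`2 t^r ∑_{l<m} (-1)^l e_λ^{l+x}(t) / (e_λ(t)^m + 1)`.
The substitution `t ↦ m t` turns `e_{λ/m}^{y/m}(t)` into `e_λ^y(t)`, so the right-hand side is
`m^{-r}` times the rescaled sum of the generating functions of `A^{(r)}_{n,λ/m}((l+x)/m)`;
comparing coefficients of `t^n` produces the factor `m^{n-r}`.
-/

open PowerSeries

namespace PowerSeries

variable {k : Type*} [Field k]

lemma rescale_inv (c : k) (f : k⟦X⟧) : rescale c f⁻¹ = (rescale c f)⁻¹ := by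
  have hconst : constantCoeff (rescale c f) = constantCoeff f := by
    simp [← coeff_zero_eq_constantCoeff, coeff_rescale]
  by_cases hf : constantCoeff f = 0
  · rw [PowerSeries.inv_eq_zero.mpr hf, PowerSeries.inv_eq_zero.mpr (hconst.trans hf), map_zero]
  · rw [eq_comm, PowerSeries.inv_eq_iff_mul_eq_one (hconst ▸ hf), ← map_mul,
      PowerSeries.inv_mul_cancel _ hf, map_one]

lemma mul_inv_eq_mul_inv_of_mul_eq {a b c d : k⟦X⟧} (hb : constantCoeff b ≠ 0)
    (hd : constantCoeff d ≠ 0) (h : a * d = c * b) : a * b⁻¹ = c * d⁻¹ := by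
  rw [eq_mul_inv_iff_mul_eq hd, mul_right_comm, h, mul_assoc, PowerSeries.mul_inv_cancel _ hb,
    mul_one]

end PowerSeries

lemma Odd.geom_sum_neg_mul_add_one {R : Type*} [Ring R] {m : ℕ} (hm : Odd m) (u : R) :
    (∑ i ∈ range m, (-u) ^ i) * (u + 1) = u ^ m + 1 := by
  rw [show u + 1 = -(-u - 1) by abel, mul_neg, geom_sum_mul, hm.neg_pow]
  abel

lemma gff_succ (lam x : ℝ) (n : ℕ) : gff lam x (n + 1) = gff lam x n * (x - n * lam) :=
  prod_range_succ _ _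

lemma gff_mul_mul (c lam x : ℝ) (n : ℕ) : gff (c * lam) (c * x) n = c ^ n * gff lam x n := by
  have h (i : ℕ) : c * x - i * (c * lam) = c * (x - i * lam) := by ring
  simp only [gff, h, prod_mul_distrib, prod_const, card_range]

lemma gff_add (lam x y : ℝ) (n : ℕ) :
    gff lam (x + y) n =
      ∑ ij ∈ antidiagonal n, (n.choose ij.1 : ℝ) * (gff lam x ij.1 * gff lam y ij.2) := by
  induction n with
  | zero => simp [gff]
  | succ n ih =>
    rw [sum_antidiagonal_choose_succ_mul (fun i j => gff lam x i * gff lam y j), gff_succ, ih,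
      sum_mul, ← sum_add_distrib]
    refine sum_congr rfl fun ij hij => ?_
    rw [HasAntidiagonal.mem_antidiagonal] at hij
    rw [← Nat.choose_symm_of_eq_add hij.symm, gff_succ, gff_succ, ← hij]
    push_cast
    ring

lemma degExp_add (lam x y : ℝ) : degExp lam (x + y) = degExp lam x * degExp lam y := by
  ext n
  simp only [coeff_mul, degExp, coeff_mk, gff_add, sum_div]
  refine sum_congr rfl fun ij hij => ?_
  rw [← HasAntidiagonal.mem_antidiagonal.mp hij, Nat.cast_add_choose]
  field_simp

lemma degExp_zero (lam : ℝ) : degExp lam 0 = 1 := by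
  ext (_ | n) <;> simp [degExp, gff, prod_range_succ']

lemma degExp_natCast (lam : ℝ) (k : ℕ) : degExp lam k = degExp lam 1 ^ k := by
  induction k with
  | zero => simp [degExp_zero]
  | succ k ih => rw [Nat.cast_succ, degExp_add, ih, pow_succ]

@[simp]
lemma constantCoeff_degExp (lam x : ℝ) : constantCoeff (degExp lam x) = 1 := by
  simp [degExp, gff]

lemma rescale_degExp (c lam x : ℝ) : rescale c (degExp lam x) = degExp (c * lam) (c * x) := by
  ext n
  simp [coeff_rescale, degExp, gff_mul_mul, mul_div_assoc]

lemma egfCoeff_C_mul (a : ℝ) (f : ℝ⟦X⟧) (n : ℕ) :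
    egfCoeff (C a * f) n = a * egfCoeff f n := by
  simp only [egfCoeff, coeff_C_mul]
  ring

lemma egfCoeff_rescale (c : ℝ) (f : ℝ⟦X⟧) (n : ℕ) :
    egfCoeff (rescale c f) n = c ^ n * egfCoeff f n := by
  simp only [egfCoeff, coeff_rescale]
  ring

lemma egfCoeff_sum {ι : Type*} (s : Finset ι) (f : ι → ℝ⟦X⟧) (n : ℕ) :
    egfCoeff (∑ i ∈ s, f i) n = ∑ i ∈ s, egfCoeff (f i) n := by
  simp only [egfCoeff, map_sum, mul_sum]

def eulerGenocchiGF (lam : ℝ) (r : ℕ) (x : ℝ) : ℝ⟦X⟧ :=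
  2 * X ^ r * degExp lam x * (degExp lam 1 + 1)⁻¹

lemma A_eq_egfCoeff (lam : ℝ) (r : ℕ) (x : ℝ) (n : ℕ) :
    A lam r x n = egfCoeff (eulerGenocchiGF lam r x) n :=
  rfl

lemma rescale_eulerGenocchiGF (c lam : ℝ) (r : ℕ) (x : ℝ) :
    rescale c (eulerGenocchiGF lam r x) =
      C (c ^ r) * (2 * X ^ r * degExp (c * lam) (c * x) * (degExp (c * lam) c + 1)⁻¹) := by
  have hX : rescale c (X ^ r) = C (c ^ r) * X ^ r := by
    rw [map_pow, rescale_X, mul_pow, ← map_pow]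
  simp only [eulerGenocchiGF, map_mul, map_ofNat, hX, rescale_inv, map_add, map_one,
    rescale_degExp, mul_one]
  ring

lemma degExp_mul_inv_eq_sum (lam x : ℝ) {m : ℕ} (hm : Odd m) :
    degExp lam x * (degExp lam 1 + 1)⁻¹ =
      (∑ l ∈ range m, C ((-1) ^ l) * degExp lam (l + x)) * (degExp lam m + 1)⁻¹ := by
  have hsum : ∑ l ∈ range m, C ((-1 : ℝ) ^ l) * degExp lam (l + x) =
      degExp lam x * ∑ l ∈ range m, (-degExp lam 1) ^ l := by
    rw [mul_sum]
    refine sum_congr rfl fun l _ => ?_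
    rw [degExp_add, degExp_natCast, neg_pow (degExp lam 1), map_pow, map_neg, map_one]
    ring
  apply mul_inv_eq_mul_inv_of_mul_eq (by norm_num) (by norm_num)
  rw [hsum, mul_assoc, hm.geom_sum_neg_mul_add_one, degExp_natCast]

lemma eulerGenocchiGF_distribution (lam x : ℝ) (r : ℕ) {m : ℕ} (hm : Odd m) :
    C ((m : ℝ) ^ r) * eulerGenocchiGF lam r x =
      ∑ l ∈ range m,
        C ((-1) ^ l) * rescale (m : ℝ) (eulerGenocchiGF (lam / m) r ((l + x) / m)) := by
  have hm0 : (m : ℝ) ≠ 0 := by exact_mod_cast hm.pos.ne'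
  simp only [rescale_eulerGenocchiGF, mul_div_cancel₀ _ hm0]
  rw [eulerGenocchiGF, mul_assoc _ (degExp lam x), degExp_mul_inv_eq_sum lam x hm, sum_mul,
    mul_sum, mul_sum]
  refine sum_congr rfl fun l _ => ?_
  ring

theorem A_distribution_general (lam : ℝ) (x : ℝ) (m : ℕ) (hodd : Odd m) (n r : ℕ) :
    A lam r x n =
      (m : ℝ) ^ ((n : ℤ) - (r : ℤ)) *
        ∑ l ∈ Finset.range m, (-1 : ℝ) ^ l * A (lam / m) r ((l + x) / m) n := by
  have hm0 : (m : ℝ) ≠ 0 := by exact_mod_cast hodd.pos.ne'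
  have key := congrArg (egfCoeff · n) (eulerGenocchiGF_distribution lam x r hodd)
  simp only [egfCoeff_C_mul, egfCoeff_sum, egfCoeff_rescale, ← A_eq_egfCoeff] at key
  rw [zpow_sub₀ hm0, zpow_natCast, zpow_natCast, div_mul_eq_mul_div, eq_div_iff (by positivity),
    mul_comm, key, mul_sum]
  refine sum_congr rfl fun l _ => ?_
  ring

/-- Theorem 2 of the paper: for odd `m ∈ ℕ`, `m ≥ 1`, and `n, r ≥ 0`,
`A^{(r)}_{n,λ}(x) = m^{n-r} ∑_{l=0}^{m-1} (-1)^l A^{(r)}_{n,λ/m}((l+x)/m)`. -/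
theorem A_distribution (lam : ℝ) (hlam : lam ≠ 0) (x : ℝ) (m : ℕ) (hm : 0 < m)
    (hodd : Odd m) (n r : ℕ) :
    A lam r x n =
      (m : ℝ) ^ ((n : ℤ) - (r : ℤ)) *
        ∑ l ∈ Finset.range m, (-1 : ℝ) ^ l * A (lam / m) r ((l + x) / m) n :=
  A_distribution_general lam x m hodd n r
end
end

section
/- For every integer n ≥ 1, the degenerate Euler numbers satisfy E_{n,λ} = ∑_{k=1}^{n} (−1)^k · k! · (1/2)^k · S_{2,λ}(n,k), and E_{0,λ} = 1. -/
open Finset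

noncomputable section

lemma coeff_pow_eq_zero_of_lt' {g : PowerSeries ℝ} (hg : PowerSeries.constantCoeff (R := ℝ) g = 0)
    {k m : ℕ} (h : m < k) : PowerSeries.coeff (R := ℝ) m (g ^ k) = 0 := by
  have hd : PowerSeries.X ^ k ∣ g ^ k :=
    pow_dvd_pow_of_dvd (PowerSeries.X_dvd_iff.mpr hg) k
  exact (PowerSeries.X_pow_dvd_iff.mp hd) m h

lemma geom_inv {g : PowerSeries ℝ} (hg : PowerSeries.constantCoeff (R := ℝ) g = 0) :
    (1 + g) * PowerSeries.mk (fun m => ∑ k ∈ Finset.range (m + 1),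
      (-1 : ℝ) ^ k * PowerSeries.coeff (R := ℝ) m (g ^ k)) = 1 := by
  set S := PowerSeries.mk (fun m => ∑ k ∈ Finset.range (m + 1),
      (-1 : ℝ) ^ k * PowerSeries.coeff (R := ℝ) m (g ^ k)) with hS
  ext n
  rw [add_mul, one_mul, map_add, PowerSeries.coeff_mul]
  have key : ∀ p ∈ Finset.HasAntidiagonal.antidiagonal n,
      PowerSeries.coeff (R := ℝ) p.1 g * PowerSeries.coeff (R := ℝ) p.2 S =
      ∑ k ∈ Finset.range (n + 1),
        (-1 : ℝ) ^ k * (PowerSeries.coeff (R := ℝ) p.1 g * PowerSeries.coeff (R := ℝ) p.2 (g ^ k)) := by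
    intro p hp
    rw [Finset.HasAntidiagonal.mem_antidiagonal] at hp
    rw [hS, PowerSeries.coeff_mk]
    rw [Finset.sum_subset (Finset.range_subset_range.mpr (by omega : p.2 + 1 ≤ n + 1))
      (fun k _ hk' => by
        rw [coeff_pow_eq_zero_of_lt' hg (by simp only [Finset.mem_range, not_lt] at hk'; omega),
          mul_zero]),
      Finset.mul_sum]
    exact Finset.sum_congr rfl fun k _ => by ring
  rw [Finset.sum_congr rfl key, Finset.sum_comm]
  have key2 : ∀ k ∈ Finset.range (n + 1),
      (∑ p ∈ Finset.HasAntidiagonal.antidiagonal n,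
        (-1 : ℝ) ^ k * (PowerSeries.coeff (R := ℝ) p.1 g * PowerSeries.coeff (R := ℝ) p.2 (g ^ k))) =
      -((-1 : ℝ) ^ (k + 1) * PowerSeries.coeff (R := ℝ) n (g ^ (k + 1))) := by
    intro k _
    rw [← Finset.mul_sum, ← PowerSeries.coeff_mul, ← pow_succ']
    ring
  rw [Finset.sum_congr rfl key2, hS, PowerSeries.coeff_mk]
  have := Finset.sum_range_sub' (fun k => (-1 : ℝ) ^ k * PowerSeries.coeff (R := ℝ) n (g ^ k)) (n + 1)
  rw [← Finset.sum_add_distrib]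
  calc ∑ k ∈ Finset.range (n + 1),
        ((-1 : ℝ) ^ k * PowerSeries.coeff (R := ℝ) n (g ^ k) +
          -((-1 : ℝ) ^ (k + 1) * PowerSeries.coeff (R := ℝ) n (g ^ (k + 1))))
      = ∑ k ∈ Finset.range (n + 1),
        ((-1 : ℝ) ^ k * PowerSeries.coeff (R := ℝ) n (g ^ k) -
          (-1 : ℝ) ^ (k + 1) * PowerSeries.coeff (R := ℝ) n (g ^ (k + 1))) := by
        exact Finset.sum_congr rfl fun k _ => by ring
    _ = (-1 : ℝ) ^ 0 * PowerSeries.coeff (R := ℝ) n (g ^ 0) -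
          (-1 : ℝ) ^ (n + 1) * PowerSeries.coeff (R := ℝ) n (g ^ (n + 1)) := this
    _ = PowerSeries.coeff (R := ℝ) n 1 := by
        rw [coeff_pow_eq_zero_of_lt' hg (Nat.lt_succ_self n), pow_zero, pow_zero, one_mul]
        ring

lemma constCoeff_degExp (lam : ℝ) : PowerSeries.constantCoeff (R := ℝ) (degExp lam 1) = 1 := by
  simp [degExp, gff, ← PowerSeries.coeff_zero_eq_constantCoeff]

lemma enum_coeff (lam : ℝ) (n : ℕ) :
    PowerSeries.coeff (R := ℝ) n (2 * (degExp lam 1 + 1)⁻¹) =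
      ∑ k ∈ Finset.range (n + 1),
        (-1 : ℝ) ^ k * (1 / 2 : ℝ) ^ k * PowerSeries.coeff (R := ℝ) n ((degExp lam 1 - 1) ^ k) := by
  set e := degExp lam 1 with he
  set g : PowerSeries ℝ := PowerSeries.C (R := ℝ) (1 / 2) * (e - 1) with hg
  have hgc : PowerSeries.constantCoeff (R := ℝ) g = 0 := by
    simp [hg, he, constCoeff_degExp]
  set S := PowerSeries.mk (fun m => ∑ k ∈ Finset.range (m + 1),
      (-1 : ℝ) ^ k * PowerSeries.coeff (R := ℝ) m (g ^ k)) with hS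
  have hmul : (1 + g) * S = 1 := geom_inv hgc
  have hC2 : (2 : PowerSeries ℝ) = PowerSeries.C (R := ℝ) 2 := by
    rw [map_ofNat]
  have h2 : e + 1 = PowerSeries.C (R := ℝ) 2 * (1 + g) := by
    rw [hg]
    have : PowerSeries.C (R := ℝ) 2 * PowerSeries.C (R := ℝ) (1 / 2) = 1 := by
      rw [← map_mul]; norm_num
    calc e + 1 = PowerSeries.C (R := ℝ) 2 +
          (PowerSeries.C (R := ℝ) 2 * PowerSeries.C (R := ℝ) (1 / 2)) * (e - 1) := by
          rw [this, one_mul, ← hC2]; ring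
      _ = PowerSeries.C (R := ℝ) 2 * (1 + PowerSeries.C (R := ℝ) (1 / 2) * (e - 1)) := by ring
  have hcc : PowerSeries.constantCoeff (R := ℝ) (e + 1) ≠ 0 := by
    simp [constCoeff_degExp, he]
  have hinv : (e + 1)⁻¹ = PowerSeries.C (R := ℝ) (1 / 2) * S := by
    symm
    rw [PowerSeries.eq_inv_iff_mul_eq_one hcc, h2]
    calc PowerSeries.C (R := ℝ) (1 / 2) * S * (PowerSeries.C (R := ℝ) 2 * (1 + g)) =
        (PowerSeries.C (R := ℝ) (1 / 2) * PowerSeries.C (R := ℝ) 2) * ((1 + g) * S) := by ring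
      _ = 1 := by rw [hmul, ← map_mul]; norm_num
  have h2S : (2 : PowerSeries ℝ) * (e + 1)⁻¹ = S := by
    rw [hinv, hC2, ← mul_assoc, ← map_mul]
    norm_num
  rw [h2S, hS, PowerSeries.coeff_mk]
  refine Finset.sum_congr rfl fun k _ => ?_
  rw [hg, mul_pow, ← map_pow, PowerSeries.coeff_C_mul]
  ring

/-- equation (40) of the paper: for `n ≥ 1`,
`E_{n,λ} = ∑_{k=1}^n (-1)^k k! (1/2)^k S_{2,λ}(n,k)`, and `E_{0,λ} = 1`. -/
theorem Enum_eq_sum_S2 (lam : ℝ) (hlam : lam ≠ 0) (n : ℕ) (hn : 1 ≤ n) :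
    Enum lam n =
        ∑ k ∈ Finset.Icc 1 n,
          (-1 : ℝ) ^ k * (k.factorial : ℝ) * (1 / 2 : ℝ) ^ k * S2 lam n k ∧
      Enum lam 0 = 1 := by
  have h0 : Enum lam 0 = 1 := by
    rw [Enum, egfCoeff, enum_coeff]
    simp [PowerSeries.coeff_one]
  refine ⟨?_, h0⟩
  rw [Enum, egfCoeff, enum_coeff, Finset.mul_sum]
  rw [← Finset.sum_subset (s₁ := Finset.Icc 1 n) (s₂ := Finset.range (n + 1))
    (fun k hk => by simp only [Finset.mem_Icc] at hk; simp only [Finset.mem_range]; omega)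
    (fun k hk hk' => by
      have hk0 : k = 0 := by
        simp only [Finset.mem_range] at hk
        simp only [Finset.mem_Icc] at hk'
        omega
      subst hk0
      simp [PowerSeries.coeff_one, Nat.one_le_iff_ne_zero.mp hn])]
  refine Finset.sum_congr rfl fun k hk => ?_
  rw [S2, egfCoeff, PowerSeries.coeff_C_mul]
  have hkf : (k.factorial : ℝ) ≠ 0 := Nat.cast_ne_zero.mpr k.factorial_ne_zero
  field_simp
end
end
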